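/- Let p_1 and p_2 be real polynomials of degree at most N, and let a_1, a_2 be positive integers. Then the number of integers k for which there exists t_k ∈ ℝ with C^{-1} 2^{a_1 k} ≤ |p_1(t_k)| ≤ C 2^{a_1 k} and C^{-1} 2^{-a_2 k} ≤ |p_2(t_k)| ≤ C 2^{-a_2 k} is bounded by a constant depending only on N and C. -/

import Mathlib

/-!
If `2 ^ N * |P x| < |P y|` for a real polynomial `P` of degree at most `N`, then some complex root
of `P` has real part closer to `x` than `y` is: otherwise every factor `‖y - z‖` of `|P y|` is at
most `2 * ‖x - z‖`.

Pick `g` with `2 ^ N * C ^ 2 < 2 ^ g`. Along a residue class of indices `k` modulo `g`, the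
witnesses `t k` make `|p₁|` grow and `|p₂|` shrink by factors beyond `2 ^ N`, so each `t k` is
closer to one of the at most `2 * N` real parts of roots of `p₁` and `p₂` than to any other
witness. Two points on the same side of `α` are no farther apart than the farther of them is from
`α`, so each `α` is the nearest root for at most one witness on either side. Hence each of the `g`
residue classes contains at most `4 * N + 1` indices.
-/

open Polynomial

theorem Polynomial.Splits.norm_eval_le_two_pow_mul {𝕜 : Type*} [NormedField 𝕜] {P : 𝕜[X]}
    (hP : P.Splits) {x y : 𝕜} (h : ∀ z ∈ P.roots, ‖y - x‖ ≤ ‖x - z‖) :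
    ‖P.eval y‖ ≤ 2 ^ P.natDegree * ‖P.eval x‖ := by
  have hnorm (w : 𝕜) : ‖P.eval w‖ = ‖P.leadingCoeff‖ * (P.roots.map (‖w - ·‖)).prod := by
    rw [hP.eval_eq_prod_roots, norm_mul, ← normHom_apply (P.roots.map _).prod, map_multiset_prod,
      Multiset.map_map]
    rfl
  have hfactor : ∀ z ∈ P.roots, ‖y - z‖ ≤ 2 * ‖x - z‖ := fun z hz =>
    calc ‖y - z‖ ≤ ‖y - x‖ + ‖x - z‖ := norm_sub_le_norm_sub_add_norm_sub y x z
      _ ≤ 2 * ‖x - z‖ := by linarith [h z hz]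
  have hprod : (P.roots.map (‖y - ·‖)).prod ≤ 2 ^ P.natDegree * (P.roots.map (‖x - ·‖)).prod := by
    rw [hP.natDegree_eq_card_roots, ← Multiset.prod_replicate, ← Multiset.map_const',
      ← Multiset.prod_map_mul]
    exact Multiset.prod_map_le_prod_map₀ _ _ (fun _ _ => norm_nonneg _) hfactor
  rw [hnorm, hnorm, mul_left_comm]
  exact mul_le_mul_of_nonneg_left hprod (norm_nonneg _)

noncomputable def rootRealParts (P : ℝ[X]) : Finset ℝ :=
  (P.map (algebraMap ℝ ℂ)).roots.toFinset.image Complex.re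

theorem card_rootRealParts_le (P : ℝ[X]) : (rootRealParts P).card ≤ P.natDegree :=
  Finset.card_image_le.trans <| (Multiset.toFinset_card_le _).trans <|
    (card_roots' _).trans natDegree_map_le

theorem norm_eval_map_ofReal (P : ℝ[X]) (x : ℝ) :
    ‖(P.map (algebraMap ℝ ℂ)).eval (x : ℂ)‖ = |P.eval x| := by
  simpa [eval_map_algebraMap] using
    congrArg norm (aeval_algebraMap_apply_eq_algebraMap_eval (A := ℂ) x P)

theorem exists_mem_rootRealParts_abs_sub_lt {P : ℝ[X]} {N : ℕ} (hd : P.natDegree ≤ N) {x y : ℝ}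
    (h : 2 ^ N * |P.eval x| < |P.eval y|) : ∃ α ∈ rootRealParts P, |x - α| < |x - y| := by
  by_contra! hfar
  have hroots : ∀ z ∈ (P.map (algebraMap ℝ ℂ)).roots, ‖(y : ℂ) - x‖ ≤ ‖(x : ℂ) - z‖ :=
    fun z hz =>
    calc ‖(y : ℂ) - x‖ = |x - y| := by
          rw [← Complex.ofReal_sub, Complex.norm_real, Real.norm_eq_abs, abs_sub_comm]
      _ ≤ |x - z.re| := hfar _ (Finset.mem_image_of_mem _ (Multiset.mem_toFinset.2 hz))
      _ ≤ ‖(x : ℂ) - z‖ := by simpa using Complex.abs_re_le_norm ((x : ℂ) - z)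
  have hle := (IsAlgClosed.splits (P.map (algebraMap ℝ ℂ))).norm_eval_le_two_pow_mul hroots
  rw [norm_eval_map_ofReal, norm_eval_map_ofReal, natDegree_map] at hle
  have := pow_le_pow_right₀ (one_le_two (α := ℝ)) hd
  nlinarith [abs_nonneg (P.eval x)]

theorem abs_sub_le_max_of_lt_iff_lt {a b c : ℝ} (h : a < c ↔ b < c) :
    |a - b| ≤ max |a - c| |b - c| := by
  rcases lt_or_ge a c with ha | ha
  · have hb := h.1 ha
    rw [abs_of_neg (sub_neg.2 ha), abs_of_neg (sub_neg.2 hb), abs_sub_le_iff]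
    constructor <;> simp only [le_max_iff] <;> [right; left] <;> linarith
  · have hb := le_of_not_gt (mt h.2 (not_lt.2 ha))
    rw [abs_of_nonneg (sub_nonneg.2 ha), abs_of_nonneg (sub_nonneg.2 hb), abs_sub_le_iff]
    constructor <;> simp only [le_max_iff] <;> [left; right] <;> linarith

theorem card_le_two_mul_card_add_one {ι : Type*} {s : Finset ι} {t : ι → ℝ} {R : Finset ℝ}
    (h : ∀ i ∈ s, ∀ j ∈ s, i ≠ j → ∃ α ∈ R, |t i - α| < |t i - t j|) :
    s.card ≤ 2 * R.card + 1 := by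
  classical
  rcases le_or_gt s.card 1 with hs | hs
  · omega
  have nearest : ∀ i ∈ s, ∃ α ∈ R, ∀ j ∈ s, j ≠ i → |t i - α| < |t i - t j| := by
    intro i hi
    obtain ⟨j₀, hj₀, hj₀i⟩ := Finset.exists_mem_ne hs i
    obtain ⟨j, hj, hmin⟩ := (s.erase i).exists_min_image (fun j => |t i - t j|)
      ⟨j₀, Finset.mem_erase.2 ⟨hj₀i, hj₀⟩⟩
    obtain ⟨α, hα, hlt⟩ := h i hi j (Finset.mem_of_mem_erase hj) (Finset.ne_of_mem_erase hj).symm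
    exact ⟨α, hα, fun k hk hki => hlt.trans_le (hmin k (Finset.mem_erase.2 ⟨hki, hk⟩))⟩
  choose! f hfR hf using nearest
  have hinj : Set.InjOn (fun i => (f i, decide (t i < f i))) s := by
    intro i hi j hj hij
    simp only [Prod.mk.injEq, decide_eq_decide] at hij
    obtain ⟨hfij, hside⟩ := hij
    by_contra hne
    have hi' := hf i hi j hj (Ne.symm hne)
    have hj' := hf j hj i hi hne
    rw [abs_sub_comm (t j) (t i), ← hfij] at hj'
    rw [← hfij] at hside
    exact (abs_sub_le_max_of_lt_iff_lt hside).not_gt (max_lt hi' hj')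
  have hcard := Finset.card_le_card_of_injOn _ (fun i hi => Finset.mem_product.2
    ⟨hfR i hi, Finset.mem_univ _⟩) hinj
  rw [Finset.card_product, Finset.card_univ, Fintype.card_bool] at hcard
  omega

def patternIndices (C : ℝ) (p₁ p₂ : ℝ[X]) (a₁ a₂ : ℕ) : Set ℤ :=
  {k : ℤ | ∃ t : ℝ,
    C⁻¹ * (2 : ℝ) ^ ((a₁ : ℤ) * k) ≤ |p₁.eval t| ∧
    |p₁.eval t| ≤ C * (2 : ℝ) ^ ((a₁ : ℤ) * k) ∧
    C⁻¹ * (2 : ℝ) ^ (-(a₂ : ℤ) * k) ≤ |p₂.eval t| ∧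
    |p₂.eval t| ≤ C * (2 : ℝ) ^ (-(a₂ : ℤ) * k)}

theorem two_pow_mul_lt_of_le_of_le {N g : ℕ} {C : ℝ} (hC : 0 < C) (hg : 2 ^ N * C ^ 2 < 2 ^ g)
    {e e' : ℤ} (he : e + g ≤ e') {v v' : ℝ} (hv : v ≤ C * 2 ^ e) (hv' : C⁻¹ * 2 ^ e' ≤ v') :
    2 ^ N * v < v' := by
  have hgap : (2 : ℝ) ^ g * 2 ^ e ≤ 2 ^ e' := by
    rw [← zpow_natCast, ← zpow_add₀ two_ne_zero, add_comm]
    exact zpow_le_zpow_right₀ one_le_two he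
  have hC' : 2 ^ N * C < C⁻¹ * 2 ^ g := by
    rw [inv_mul_eq_div, lt_div_iff₀ hC]
    linarith
  calc 2 ^ N * v ≤ 2 ^ N * C * 2 ^ e := by
        rw [mul_assoc]; exact mul_le_mul_of_nonneg_left hv (by positivity)
    _ < C⁻¹ * 2 ^ g * 2 ^ e := mul_lt_mul_of_pos_right hC' (by positivity)
    _ ≤ C⁻¹ * 2 ^ e' := by
        rw [mul_assoc]; exact mul_le_mul_of_nonneg_left hgap (by positivity)
    _ ≤ v' := hv'

theorem Set.finite_and_ncard_le_of_forall_finset {α : Type*} {s : Set α} {n : ℕ}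
    (h : ∀ F : Finset α, ↑F ⊆ s → F.card ≤ n) : s.Finite ∧ s.ncard ≤ n := by
  have hfin : s.Finite := by
    by_contra hinf
    obtain ⟨F, hFs, hF⟩ := Set.Infinite.exists_subset_card_eq hinf (n + 1)
    have := h F hFs
    omega
  refine ⟨hfin, ?_⟩
  rw [Set.ncard_eq_toFinset_card s hfin]
  exact h _ hfin.coe_toFinset.subset

theorem card_le_of_separated_subset_patternIndices {N g : ℕ} {C : ℝ} (hC : 0 < C)
    (hg : 2 ^ N * C ^ 2 < 2 ^ g)
    {p₁ p₂ : ℝ[X]} (h₁ : p₁.natDegree ≤ N) (h₂ : p₂.natDegree ≤ N) {a₁ a₂ : ℕ} (ha₁ : 0 < a₁)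
    (ha₂ : 0 < a₂) {G : Finset ℤ} (hG : ↑G ⊆ patternIndices C p₁ p₂ a₁ a₂)
    (hsep : ∀ k ∈ G, ∀ k' ∈ G, k < k' → k + g ≤ k') :
    G.card ≤ 2 * (2 * N) + 1 := by
  choose! t ht using fun k (hk : k ∈ G) => hG hk
  have grow : ∀ k ∈ G, ∀ k' ∈ G, k < k' → 2 ^ N * |p₁.eval (t k)| < |p₁.eval (t k')| ∧
      2 ^ N * |p₂.eval (t k')| < |p₂.eval (t k)| := by
    intro k hk k' hk' hlt
    have hgap := hsep k hk k' hk' hlt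
    obtain ⟨-, hk₁, hk₂, -⟩ := ht k hk
    obtain ⟨hk'₁, -, -, hk'₂⟩ := ht k' hk'
    have ha₁' : (1 : ℤ) ≤ a₁ := by exact_mod_cast ha₁
    have ha₂' : (1 : ℤ) ≤ a₂ := by exact_mod_cast ha₂
    exact ⟨two_pow_mul_lt_of_le_of_le hC hg (by nlinarith) hk₁ hk'₁,
      two_pow_mul_lt_of_le_of_le hC hg (by nlinarith) hk'₂ hk₂⟩
  have near : ∀ k ∈ G, ∀ k' ∈ G, k ≠ k' →
      ∃ α ∈ rootRealParts p₁ ∪ rootRealParts p₂, |t k - α| < |t k - t k'| := by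
    intro k hk k' hk' hne
    rcases hne.lt_or_gt with hlt | hgt
    · obtain ⟨α, hα, hnear⟩ := exists_mem_rootRealParts_abs_sub_lt h₁ (grow k hk k' hk' hlt).1
      exact ⟨α, Finset.mem_union_left _ hα, hnear⟩
    · obtain ⟨α, hα, hnear⟩ := exists_mem_rootRealParts_abs_sub_lt h₂ (grow k' hk' k hk hgt).2
      exact ⟨α, Finset.mem_union_right _ hα, hnear⟩
  have hR : (rootRealParts p₁ ∪ rootRealParts p₂).card ≤ 2 * N := by
    have := Finset.card_union_le (rootRealParts p₁) (rootRealParts p₂)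
    have := (card_rootRealParts_le p₁).trans h₁
    have := (card_rootRealParts_le p₂).trans h₂
    omega
  have := card_le_two_mul_card_add_one near
  omega

/-- Two polynomials of bounded degree can simultaneously attain the comparability pattern
`(2^{a₁k}, 2^{-a₂k})` for only boundedly many integers `k`. -/
theorem stmt10 (N : ℕ) (C : ℝ) (hC : 1 ≤ C) :
    ∃ D : ℕ, ∀ (p₁ p₂ : Polynomial ℝ), p₁.natDegree ≤ N → p₂.natDegree ≤ N →
      ∀ (a₁ a₂ : ℕ), 0 < a₁ → 0 < a₂ →
        {k : ℤ | ∃ t : ℝ,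
          C⁻¹ * (2 : ℝ) ^ ((a₁ : ℤ) * k) ≤ |p₁.eval t| ∧
          |p₁.eval t| ≤ C * (2 : ℝ) ^ ((a₁ : ℤ) * k) ∧
          C⁻¹ * (2 : ℝ) ^ (-(a₂ : ℤ) * k) ≤ |p₂.eval t| ∧
          |p₂.eval t| ≤ C * (2 : ℝ) ^ (-(a₂ : ℤ) * k)}.Finite ∧
        {k : ℤ | ∃ t : ℝ,
          C⁻¹ * (2 : ℝ) ^ ((a₁ : ℤ) * k) ≤ |p₁.eval t| ∧
          |p₁.eval t| ≤ C * (2 : ℝ) ^ ((a₁ : ℤ) * k) ∧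
          C⁻¹ * (2 : ℝ) ^ (-(a₂ : ℤ) * k) ≤ |p₂.eval t| ∧
          |p₂.eval t| ≤ C * (2 : ℝ) ^ (-(a₂ : ℤ) * k)}.ncard ≤ D := by
  obtain ⟨g, hg⟩ := pow_unbounded_of_one_lt (2 ^ N * C ^ 2) one_lt_two
  have hg0 : (0 : ℤ) < g := by
    have hNC : (2 : ℝ) ^ 0 ≤ 2 ^ N * C ^ 2 := by
      rw [pow_zero]; exact one_le_mul_of_one_le_of_one_le (one_le_pow₀ one_le_two) (one_le_pow₀ hC)
    exact_mod_cast (pow_lt_pow_iff_right₀ one_lt_two).1 (hNC.trans_lt hg)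
  refine ⟨(2 * (2 * N) + 1) * g, fun p₁ p₂ h₁ h₂ a₁ a₂ ha₁ ha₂ =>
    Set.finite_and_ncard_le_of_forall_finset fun F hF => ?_⟩
  have hres : ∀ k ∈ F, k % g ∈ Finset.Ico 0 (g : ℤ) := fun k _ =>
    Finset.mem_Ico.2 ⟨Int.emod_nonneg k hg0.ne', Int.emod_lt_of_pos k hg0⟩
  have hsep (r : ℤ) :
      ∀ k ∈ {k ∈ F | k % g = r}, ∀ k' ∈ {k ∈ F | k % g = r}, k < k' → k + g ≤ k' := by
    intro k hk k' hk' hlt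
    have hmod : k ≡ k' [ZMOD g] := (Finset.mem_filter.1 hk).2.trans (Finset.mem_filter.1 hk').2.symm
    have := Int.le_of_dvd (sub_pos.2 hlt) hmod.dvd
    omega
  calc F.card ≤ (2 * (2 * N) + 1) * (Finset.Ico 0 (g : ℤ)).card :=
        Finset.card_le_mul_card_image_of_maps_to hres _ fun r _ =>
          card_le_of_separated_subset_patternIndices (zero_lt_one.trans_le hC) hg h₁ h₂ ha₁ ha₂
            ((Finset.coe_subset.2 (Finset.filter_subset _ _)).trans hF) (hsep r)
    _ = (2 * (2 * N) + 1) * g := by simp
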